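/- Suppose R₀ := ρ(A F*) > 1, and let u ∈ ℝ^{nm} be an entrywise-positive eigenvector with A F* u = R₀ u. Then there exists ε₀ > 0 such that for every ε ∈ (0, ε₀), the vector ε u lies in [0,1]^{nm} and H(ε u) ≥ ε u entrywise. -/

import Mathlib

open Matrix BigOperators Finset

/-- Spectral abscissa of a real square matrix: the maximum of the real parts of its
(complex) eigenvalues. -/
noncomputable def specAbscissa {k : Type*} [Fintype k] [DecidableEq k]
    (M : Matrix k k ℝ) : ℝ :=
  sSup {r : ℝ | ∃ z ∈ spectrum ℂ (M.map Complex.ofReal), z.re = r}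

/-- Diagonal `nm × nm` matrix (indexed by pairs `(α, i)`) built from rates `c^α_i`. -/
noncomputable def pairDiag {n m : ℕ} (c : Fin m → Fin n → ℝ) :
    Matrix (Fin m × Fin n) (Fin m × Fin n) ℝ :=
  Matrix.diagonal fun q => c q.1 q.2

/-- The equilibrium dispersal Laplacian `L*`: block-diagonal, whose `α`-th `n × n` block
has `(i,i)` entry `ν^α_i = ∑_{j ≠ i} q^α_{ij}` and `(i,j)` entry `-q^α_{ji} π^α_j / π^α_i`
for `j ≠ i`. -/
noncomputable def Lstar {n m : ℕ} (Q : Fin m → Matrix (Fin n) (Fin n) ℝ)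
    (piv : Fin m → Fin n → ℝ) : Matrix (Fin m × Fin n) (Fin m × Fin n) ℝ :=
  Matrix.of fun q q' =>
    if q.1 = q'.1 then
      (if q.2 = q'.2 then ∑ j ∈ Finset.univ \ {q.2}, Q q.1 q.2 j
       else -(Q q.1 q'.2 q.2 * piv q.1 q'.2 / piv q.1 q.2))
    else 0

/-- The equilibrium population-fraction matrix `F*`: the `(α,σ)` block is the diagonal
matrix with entries `f^{*σ}_i = N^σ π^σ_i / ∑_τ N^τ π^τ_i` (the same row of blocks
repeated for every `α`). -/
noncomputable def Fstar {n m : ℕ} (N : Fin m → ℝ) (piv : Fin m → Fin n → ℝ) :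
    Matrix (Fin m × Fin n) (Fin m × Fin n) ℝ :=
  Matrix.of fun q q' =>
    if q.2 = q'.2 then N q'.1 * piv q'.1 q.2 / ∑ τ, N τ * piv τ q.2 else 0

/-- Spectral radius of a real square matrix: the maximum of the absolute values of its
(complex) eigenvalues. -/
noncomputable def specRadius {k : Type*} [Fintype k] [DecidableEq k]
    (M : Matrix k k ℝ) : ℝ :=
  sSup {r : ℝ | ∃ z ∈ spectrum ℂ (M.map Complex.ofReal), ‖z‖ = r}

/-- The matrix `A = (L* + D)⁻¹ B`. -/
noncomputable def Amat {n m : ℕ} (Q : Fin m → Matrix (Fin n) (Fin n) ℝ)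
    (piv : Fin m → Fin n → ℝ) (β δ : Fin m → Fin n → ℝ) :
    Matrix (Fin m × Fin n) (Fin m × Fin n) ℝ :=
  (Lstar Q piv + pairDiag δ)⁻¹ * pairDiag β

/-- The fixed-point map `H(p) = (I + A(diag(p) + (I − diag(p)) M))⁻¹ A p`. -/
noncomputable def Hmap {n m : ℕ} (A Mlap : Matrix (Fin m × Fin n) (Fin m × Fin n) ℝ)
    (p : Fin m × Fin n → ℝ) : Fin m × Fin n → ℝ :=
  ((1 + A * (Matrix.diagonal p + (1 - Matrix.diagonal p) * Mlap))⁻¹).mulVec (A.mulVec p)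

/-!
Write `W = L* + D`, `B = diag β` and `S = diag p + (I - diag p)(I - F*)`, so that
`H(p) = (W + B S)⁻¹ B p`. For `0 < p ≤ 1` the matrix `G = W + B S` has nonpositive off-diagonal
entries and positive row sums `δ + β p`, hence `G v ≤ w` implies `v ≤ G⁻¹ w` (look at a minimal
coordinate). So `p ≤ H(p)` as soon as `G p ≤ B p`, i.e. `W p ≤ β (1 - p) F* p`. For `p = ε u` the
eigenvector relation reads `W u = R₀⁻¹ β F* u`, and the inequality holds once `ε u ≤ 1 - R₀⁻¹`.
-/

namespace Matrix

section ZMatrix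

variable {k : Type*} [Fintype k] {G : Matrix k k ℝ}

theorem nonneg_of_nonneg_mulVec (hoff : ∀ i j, i ≠ j → G i j ≤ 0)
    (hrow : ∀ i, 0 < ∑ j, G i j) {x : k → ℝ} (hGx : 0 ≤ G *ᵥ x) : 0 ≤ x := by
  intro i
  obtain ⟨i₀, -, hmin⟩ := exists_min_image univ x ⟨i, mem_univ i⟩
  have hle : (G *ᵥ x) i₀ ≤ (∑ j, G i₀ j) * x i₀ := by
    rw [mulVec, dotProduct, sum_mul]
    refine sum_le_sum fun j _ => ?_
    rcases eq_or_ne i₀ j with rfl | hj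
    · exact le_rfl
    · exact mul_le_mul_of_nonpos_left (hmin j (mem_univ j)) (hoff i₀ j hj)
  have hx₀ : 0 ≤ x i₀ := nonneg_of_mul_nonneg_right ((hGx i₀).trans hle) (hrow i₀)
  exact hx₀.trans (hmin i (mem_univ i))

theorem isUnit_det_of_offDiag_nonpos_of_rowSum_pos [DecidableEq k]
    (hoff : ∀ i j, i ≠ j → G i j ≤ 0) (hrow : ∀ i, 0 < ∑ j, G i j) : IsUnit G.det := by
  rw [isUnit_iff_ne_zero]
  intro hdet
  obtain ⟨v, hv, hGv⟩ := exists_mulVec_eq_zero_iff.mpr hdet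
  have hpos : 0 ≤ v := nonneg_of_nonneg_mulVec hoff hrow (by rw [hGv])
  have hneg : 0 ≤ -v := nonneg_of_nonneg_mulVec hoff hrow (by rw [mulVec_neg, hGv, neg_zero])
  exact hv (le_antisymm (neg_nonneg.mp hneg) hpos)

theorem le_inv_mulVec_of_mulVec_le [DecidableEq k]
    (hoff : ∀ i j, i ≠ j → G i j ≤ 0) (hrow : ∀ i, 0 < ∑ j, G i j) {v w : k → ℝ}
    (hle : G *ᵥ v ≤ w) : v ≤ G⁻¹ *ᵥ w := by
  have hG := isUnit_det_of_offDiag_nonpos_of_rowSum_pos hoff hrow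
  have hGx : G *ᵥ (G⁻¹ *ᵥ w - v) = w - G *ᵥ v := by
    rw [mulVec_sub, mulVec_mulVec, mul_nonsing_inv _ hG, one_mulVec]
  exact sub_nonneg.mp (nonneg_of_nonneg_mulVec hoff hrow (hGx ▸ sub_nonneg.mpr hle))

end ZMatrix

end Matrix

section Resolvent

variable {k : Type*} [Fintype k] [DecidableEq k]

theorem inv_one_add_inv_mul_mul_inv_mul {W : Matrix k k ℝ} (hW : IsUnit W.det)
    (B S : Matrix k k ℝ) : (1 + W⁻¹ * B * S)⁻¹ * (W⁻¹ * B) = (W + B * S)⁻¹ * B := by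
  have hfactor : 1 + W⁻¹ * B * S = W⁻¹ * (W + B * S) := by
    rw [Matrix.mul_add, nonsing_inv_mul _ hW, Matrix.mul_assoc]
  rw [hfactor, Matrix.mul_inv_rev, nonsing_inv_nonsing_inv _ hW, Matrix.mul_assoc,
    mul_nonsing_inv_cancel_left _ _ hW]

theorem diagonal_add_one_sub_diagonal_mul_one_sub (p : k → ℝ) (F : Matrix k k ℝ) :
    diagonal p + (1 - diagonal p) * (1 - F) = 1 - diagonal (1 - p) * F := by
  have hdiag : diagonal (1 - p) = 1 - diagonal p := by
    rw [← diagonal_one]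
    exact (diagonal_sub 1 p).symm
  rw [hdiag]
  noncomm_ring

theorem le_inv_one_add_mulVec_of_subsolution {W F : Matrix k k ℝ} {b p : k → ℝ}
    (hWoff : ∀ i j, i ≠ j → W i j ≤ 0) (hWrow : ∀ i, 0 ≤ ∑ j, W i j) (hW : IsUnit W.det)
    (hF : ∀ i j, 0 ≤ F i j) (hFrow : ∀ i, ∑ j, F i j = 1) (hb : ∀ i, 0 < b i)
    (hp : ∀ i, 0 < p i) (hp1 : ∀ i, p i ≤ 1)
    (hsub : ∀ i, (W *ᵥ p) i ≤ b i * (1 - p i) * (F *ᵥ p) i) :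
    p ≤ (1 + W⁻¹ * diagonal b * (diagonal p + (1 - diagonal p) * (1 - F)))⁻¹ *ᵥ
      ((W⁻¹ * diagonal b) *ᵥ p) := by
  set G := W + diagonal b * (1 - diagonal (1 - p) * F) with hGdef
  have hG : ∀ i j, G i j = W i j + b i * ((1 : Matrix k k ℝ) i j - (1 - p i) * F i j) := by
    intro i j
    simp [G, diagonal_mul]
  have hGv : ∀ v i, (G *ᵥ v) i = (W *ᵥ v) i + b i * (v i - (1 - p i) * (F *ᵥ v) i) := by
    intro v i
    simp [G, add_mulVec, sub_mulVec, ← mulVec_mulVec, mulVec_diagonal]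
  rw [diagonal_add_one_sub_diagonal_mul_one_sub, mulVec_mulVec,
    inv_one_add_inv_mul_mul_inv_mul hW, ← hGdef, ← mulVec_mulVec]
  refine le_inv_mulVec_of_mulVec_le (fun i j hij => ?_) (fun i => ?_) (fun i => ?_)
  · rw [hG, one_apply_ne hij, zero_sub, mul_neg]
    have := mul_nonneg (hb i).le (mul_nonneg (sub_nonneg.mpr (hp1 i)) (hF i j))
    linarith [hWoff i j hij]
  · have hrowSum : ∀ M : Matrix k k ℝ, ∑ j, M i j = (M *ᵥ 1) i := fun M => by
      simp [mulVec, dotProduct]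
    rw [hrowSum, hGv, ← hrowSum, ← hrowSum, hFrow, Pi.one_apply]
    nlinarith [hWrow i, hb i, hp i]
  · rw [hGv, mulVec_diagonal]
    nlinarith [hsub i, hb i]

-- `W⁻¹ = 0` for singular `W`, so the eigenvector relation itself rules that case out.
theorem isUnit_det_of_inv_mul_mulVec_eq_smul {W X : Matrix k k ℝ} {u : k → ℝ} {R : ℝ}
    (h : (W⁻¹ * X) *ᵥ u = R • u) (hR : R ≠ 0) (hu : u ≠ 0) : IsUnit W.det := by
  by_contra hW
  rw [nonsing_inv_apply_not_isUnit _ hW, Matrix.zero_mul, zero_mulVec] at h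
  exact hu ((smul_eq_zero.mp h.symm).resolve_left hR)

theorem mulVec_eq_smul_of_inv_mul_mulVec_eq_smul {W X : Matrix k k ℝ} (hW : IsUnit W.det)
    {u : k → ℝ} {R : ℝ} (h : (W⁻¹ * X) *ᵥ u = R • u) : X *ᵥ u = R • (W *ᵥ u) := by
  rw [← mulVec_smul, ← h, mulVec_mulVec, mul_nonsing_inv_cancel_left _ _ hW]

theorem smul_subsolution_of_mulVec_eq_smul {W F : Matrix k k ℝ} {b u : k → ℝ} {R ε : ℝ}
    (hF : ∀ i j, 0 ≤ F i j) (hb : ∀ i, 0 ≤ b i) (hu : ∀ i, 0 ≤ u i) (hR : 0 < R)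
    (heig : (diagonal b * F) *ᵥ u = R • (W *ᵥ u)) (hε : 0 ≤ ε)
    (hεu : ∀ i, ε * u i ≤ 1 - R⁻¹) (i : k) :
    (W *ᵥ (ε • u)) i ≤ b i * (1 - (ε • u) i) * (F *ᵥ (ε • u)) i := by
  have hWu : (W *ᵥ u) i = R⁻¹ * (b i * (F *ᵥ u) i) := by
    have := congrFun heig i
    rw [← mulVec_mulVec, mulVec_diagonal, Pi.smul_apply, smul_eq_mul] at this
    field_simp
    linarith
  have hFu : 0 ≤ ε * (b i * (F *ᵥ u) i) :=
    mul_nonneg hε (mul_nonneg (hb i) (sum_nonneg fun j _ => mul_nonneg (hF i j) (hu j)))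
  calc (W *ᵥ (ε • u)) i = R⁻¹ * (ε * (b i * (F *ᵥ u) i)) := by
        rw [mulVec_smul, Pi.smul_apply, smul_eq_mul, hWu]; ring
    _ ≤ (1 - ε * u i) * (ε * (b i * (F *ᵥ u) i)) :=
        mul_le_mul_of_nonneg_right (by linarith [hεu i]) hFu
    _ = b i * (1 - (ε • u) i) * (F *ᵥ (ε • u)) i := by
        rw [mulVec_smul]; simp only [Pi.smul_apply, smul_eq_mul]; ring

theorem smul_le_inv_one_add_mulVec_of_mulVec_eq_smul {W F : Matrix k k ℝ} {b u : k → ℝ}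
    {R ε : ℝ} (hWoff : ∀ i j, i ≠ j → W i j ≤ 0) (hWrow : ∀ i, 0 ≤ ∑ j, W i j)
    (hF : ∀ i j, 0 ≤ F i j) (hFrow : ∀ i, ∑ j, F i j = 1) (hb : ∀ i, 0 < b i)
    (hu : ∀ i, 0 < u i) (hR : 1 < R) (heig : (W⁻¹ * diagonal b * F) *ᵥ u = R • u)
    (hε : 0 < ε) (hεu : ∀ i, ε * u i ≤ 1 - R⁻¹) :
    ε • u ≤ (1 + W⁻¹ * diagonal b * (diagonal (ε • u) + (1 - diagonal (ε • u)) * (1 - F)))⁻¹ *ᵥ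
      ((W⁻¹ * diagonal b) *ᵥ (ε • u)) := by
  intro i
  rw [Matrix.mul_assoc] at heig
  have hW : IsUnit W.det :=
    isUnit_det_of_inv_mul_mulVec_eq_smul heig (by positivity) fun h => (hu i).ne' (congrFun h i)
  refine le_inv_one_add_mulVec_of_subsolution hWoff hWrow hW hF hFrow hb
    (fun j => mul_pos hε (hu j)) (fun j => (hεu j).trans (by simp [(zero_lt_one.trans hR).le]))
    (smul_subsolution_of_mulVec_eq_smul hF (fun j => (hb j).le) (fun j => (hu j).le)
      (zero_lt_one.trans hR) (mulVec_eq_smul_of_inv_mul_mulVec_eq_smul hW heig) hε.le hεu) i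

end Resolvent

section Model

variable {n m : ℕ}

theorem Lstar_apply_eq {Q : Fin m → Matrix (Fin n) (Fin n) ℝ} {piv : Fin m → Fin n → ℝ}
    (hQdiag : ∀ (α : Fin m) (i : Fin n), Q α i i = -∑ j ∈ Finset.univ \ {i}, Q α i j)
    (hpivpos : ∀ α i, 0 < piv α i) (q q' : Fin m × Fin n) :
    Lstar Q piv q q' =
      if q.1 = q'.1 then -(Q q.1 q'.2 q.2 * piv q.1 q'.2 / piv q.1 q.2) else 0 := by
  simp only [Lstar, of_apply]
  split_ifs with h₁ h₂
  · rw [← h₂, hQdiag, neg_mul, neg_div, mul_div_cancel_right₀ _ (hpivpos _ _).ne', neg_neg]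
  · rfl
  · rfl

theorem Lstar_add_pairDiag_apply_nonpos {Q : Fin m → Matrix (Fin n) (Fin n) ℝ}
    {piv : Fin m → Fin n → ℝ} (δ : Fin m → Fin n → ℝ)
    (hQoff : ∀ (α : Fin m) (i j : Fin n), i ≠ j → 0 ≤ Q α i j)
    (hpiv : ∀ α i, 0 ≤ piv α i) {q q' : Fin m × Fin n} (hqq' : q ≠ q') :
    (Lstar Q piv + pairDiag δ) q q' ≤ 0 := by
  rw [Matrix.add_apply, pairDiag, diagonal_apply_ne _ hqq', add_zero]
  simp only [Lstar, of_apply]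
  split_ifs with h₁ h₂
  · exact absurd (Prod.ext h₁ h₂) hqq'
  · exact neg_nonpos.mpr (div_nonneg
      (mul_nonneg (hQoff q.1 q'.2 q.2 (Ne.symm h₂)) (hpiv q.1 q'.2)) (hpiv q.1 q.2))
  · exact le_rfl

theorem sum_Lstar_add_pairDiag_apply {Q : Fin m → Matrix (Fin n) (Fin n) ℝ}
    {piv : Fin m → Fin n → ℝ} (δ : Fin m → Fin n → ℝ)
    (hQdiag : ∀ (α : Fin m) (i : Fin n), Q α i i = -∑ j ∈ Finset.univ \ {i}, Q α i j)
    (hpivpos : ∀ α i, 0 < piv α i)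
    (hpiveig : ∀ (α : Fin m) (i : Fin n), ∑ j, Q α j i * piv α j = 0) (q : Fin m × Fin n) :
    ∑ q', (Lstar Q piv + pairDiag δ) q q' = δ q.1 q.2 := by
  have hL : ∑ q', Lstar Q piv q q' = 0 := by
    simp only [Lstar_apply_eq hQdiag hpivpos, Fintype.sum_prod_type]
    rw [sum_eq_single q.1 (fun σ _ hσ => by simp [Ne.symm hσ]) (by simp)]
    simp only [↓reduceIte, sum_neg_distrib, ← sum_div, hpiveig, zero_div, neg_zero]
  simp [sum_add_distrib, hL, pairDiag, diagonal_apply]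

theorem Fstar_nonneg {N : Fin m → ℝ} {piv : Fin m → Fin n → ℝ} (hN : ∀ α, 0 ≤ N α)
    (hpiv : ∀ α i, 0 ≤ piv α i) (q q' : Fin m × Fin n) : 0 ≤ Fstar N piv q q' := by
  simp only [Fstar, of_apply]
  split_ifs
  · exact div_nonneg (mul_nonneg (hN _) (hpiv _ _))
      (sum_nonneg fun τ _ => mul_nonneg (hN τ) (hpiv τ _))
  · exact le_rfl

theorem sum_Fstar_apply {N : Fin m → ℝ} {piv : Fin m → Fin n → ℝ} (hN : ∀ α, 0 < N α)
    (hpivpos : ∀ α i, 0 < piv α i) (q : Fin m × Fin n) : ∑ q', Fstar N piv q q' = 1 := by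
  have hT : 0 < ∑ τ, N τ * piv τ q.2 :=
    sum_pos (fun τ _ => mul_pos (hN τ) (hpivpos τ q.2)) ⟨q.1, mem_univ _⟩
  simp only [Fstar, of_apply, Fintype.sum_prod_type, sum_ite_eq, mem_univ, if_true, ← sum_div]
  exact div_self hT.ne'

end Model

theorem Hmap_ge_on_small_multiples_of_perron_vector_general
    {n m : ℕ}
    (Q : Fin m → Matrix (Fin n) (Fin n) ℝ)
    (hQoff : ∀ (α : Fin m) (i j : Fin n), i ≠ j → 0 ≤ Q α i j)
    (hQdiag : ∀ (α : Fin m) (i : Fin n), Q α i i = -∑ j ∈ Finset.univ \ {i}, Q α i j)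
    (piv : Fin m → Fin n → ℝ) (hpivpos : ∀ α i, 0 < piv α i)
    (hpiveig : ∀ (α : Fin m) (i : Fin n), ∑ j, Q α j i * piv α j = 0)
    (N : Fin m → ℝ) (hN : ∀ α, 0 < N α)
    (β δ : Fin m → Fin n → ℝ)
    (hβ : ∀ α i, 0 < β α i) (hδ : ∀ α i, 0 ≤ δ α i)
    (R₀ : ℝ) (hR₀gt : 1 < R₀)
    (u : Fin m × Fin n → ℝ) (hu : ∀ q, 0 < u q)
    (heig : (Amat Q piv β δ * Fstar N piv).mulVec u = R₀ • u) :
    ∃ ε₀ > (0 : ℝ), ∀ ε : ℝ, 0 < ε → ε < ε₀ →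
      (∀ q, ε * u q ∈ Set.Icc (0 : ℝ) 1) ∧
      (∀ q, ε * u q ≤ Hmap (Amat Q piv β δ) (1 - Fstar N piv) (ε • u) q) := by
  have hR₀inv : 0 < 1 - R₀⁻¹ := sub_pos.mpr (inv_lt_one_of_one_lt₀ hR₀gt)
  have hR₀inv_pos : 0 < R₀⁻¹ := inv_pos.mpr (zero_lt_one.trans hR₀gt)
  have hsum : 0 < 1 + ∑ q, u q :=
    add_pos_of_pos_of_nonneg one_pos (sum_nonneg fun q _ => (hu q).le)
  refine ⟨(1 - R₀⁻¹) / (1 + ∑ q, u q), div_pos hR₀inv hsum, fun ε hε hεlt => ?_⟩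
  have hεu : ∀ q, ε * u q ≤ 1 - R₀⁻¹ := fun q => calc
    ε * u q ≤ ε * (1 + ∑ q, u q) := by
      have := single_le_sum (fun q _ => (hu q).le) (mem_univ q)
      exact mul_le_mul_of_nonneg_left (by linarith) hε.le
    _ ≤ 1 - R₀⁻¹ := (le_div_iff₀ hsum).mp hεlt.le
  refine ⟨fun q => ⟨(mul_pos hε (hu q)).le, by linarith [hεu q]⟩, ?_⟩
  exact smul_le_inv_one_add_mulVec_of_mulVec_eq_smul
    (fun _ _ => Lstar_add_pairDiag_apply_nonpos δ hQoff fun α i => (hpivpos α i).le)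
    (fun q => (sum_Lstar_add_pairDiag_apply δ hQdiag hpivpos hpiveig q).symm ▸ hδ q.1 q.2)
    (Fstar_nonneg (fun α => (hN α).le) fun α i => (hpivpos α i).le) (sum_Fstar_apply hN hpivpos)
    (fun q => hβ q.1 q.2) hu hR₀gt heig hε hεu

/-- Suppose `R₀ = ρ(A F*) > 1` and `u` is an entrywise-positive
eigenvector with `A F* u = R₀ u`. Then there exists `ε₀ > 0` such that for every
`ε ∈ (0, ε₀)`, the vector `ε u` lies in `[0,1]^{nm}` and `H(ε u) ≥ ε u` entrywise. -/
theorem Hmap_ge_on_small_multiples_of_perron_vector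
    {n m : ℕ} (hn : 2 ≤ n) (hm : 1 ≤ m)
    (Q : Fin m → Matrix (Fin n) (Fin n) ℝ)
    (hQoff : ∀ (α : Fin m) (i j : Fin n), i ≠ j → 0 ≤ Q α i j)
    (hQdiag : ∀ (α : Fin m) (i : Fin n), Q α i i = -∑ j ∈ Finset.univ \ {i}, Q α i j)
    (hQirr : ∀ (α : Fin m) (i j : Fin n),
      Relation.ReflTransGen (fun a b => 0 < Q α a b) i j)
    (piv : Fin m → Fin n → ℝ) (hpivpos : ∀ α i, 0 < piv α i)
    (hpiveig : ∀ (α : Fin m) (i : Fin n), ∑ j, Q α j i * piv α j = 0)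
    (hpivsum : ∀ α, ∑ i, piv α i = 1)
    (N : Fin m → ℝ) (hN : ∀ α, 0 < N α)
    (β δ : Fin m → Fin n → ℝ)
    (hβ : ∀ α i, 0 < β α i) (hδ : ∀ α i, 0 ≤ δ α i)
    (hδpos : ∀ α, ∃ k, 0 < δ α k)
    (R₀ : ℝ) (hR₀ : R₀ = specRadius (Amat Q piv β δ * Fstar N piv)) (hR₀gt : 1 < R₀)
    (u : Fin m × Fin n → ℝ) (hu : ∀ q, 0 < u q)
    (heig : (Amat Q piv β δ * Fstar N piv).mulVec u = R₀ • u) :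
    ∃ ε₀ > (0 : ℝ), ∀ ε : ℝ, 0 < ε → ε < ε₀ →
      (∀ q, ε * u q ∈ Set.Icc (0 : ℝ) 1) ∧
      (∀ q, ε * u q ≤ Hmap (Amat Q piv β δ) (1 - Fstar N piv) (ε • u) q) :=
  Hmap_ge_on_small_multiples_of_perron_vector_general Q hQoff hQdiag piv hpivpos hpiveig N hN β δ hβ
    hδ R₀ hR₀gt u hu heig
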